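/- arXiv:1103.1365 — 4 statements merged into one kernel-verified Lean document; each statement's English description precedes it below -/
import Mathlib

section
/- For every density matrix ρ ∈ D, the expected one-step increase of V under the measurement dynamics equals Q(ρ): Σ_{μ : p_{μ,ρ}>0} p_{μ,ρ} · V(𝕄_μ(ρ)) − V(ρ) = Q(ρ). In particular V(ρ_k) is a submartingale for the open-loop measurement dynamics, since Q(ρ) ≥ 0. -/
open Matrix BigOperators
open scoped ComplexOrder

/-- `p_{μ,ρ} = tr(M_μ ρ M_μ†)` (a real number since `ρ` is positive semidefinite). -/
noncomputable def pMeas {d m : ℕ} (M : Fin m → Matrix (Fin d) (Fin d) ℂ)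
    (ρ : Matrix (Fin d) (Fin d) ℂ) (μ : Fin m) : ℝ :=
  ((M μ * ρ * (M μ)ᴴ).trace).re

/-- `𝕄_μ(ρ) = M_μ ρ M_μ† / tr(M_μ ρ M_μ†)`. -/
noncomputable def MMap {d m : ℕ} (M : Fin m → Matrix (Fin d) (Fin d) ℂ)
    (μ : Fin m) (ρ : Matrix (Fin d) (Fin d) ℂ) : Matrix (Fin d) (Fin d) ℂ :=
  ((pMeas M ρ μ : ℂ))⁻¹ • (M μ * ρ * (M μ)ᴴ)

/-- `V(ρ) = Σ_n (⟨n|ρ|n⟩)²/2`. -/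
noncomputable def Vfun {d : ℕ} (ρ : Matrix (Fin d) (Fin d) ℂ) : ℝ :=
  ∑ n, (ρ n n).re ^ 2 / 2

/-- `Q(ρ) = (1/4) Σ_n Σ_{μ,ν} q_{μ,ν,n}(ρ)`. -/
noncomputable def Qfun {d m : ℕ} (M : Fin m → Matrix (Fin d) (Fin d) ℂ)
    (c : Fin m → Fin d → ℂ) (ρ : Matrix (Fin d) (Fin d) ℂ) : ℝ :=
  (1 / 4) * ∑ n, ∑ μ, ∑ ν,
    if 0 < pMeas M ρ μ * pMeas M ρ ν then
      pMeas M ρ μ * pMeas M ρ ν *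
        (Complex.normSq (c μ n) * (ρ n n).re / pMeas M ρ μ -
          Complex.normSq (c ν n) * (ρ n n).re / pMeas M ρ ν) ^ 2
    else 0

/-- Real-number core computation behind the submartingale identity. -/
lemma stmt_2_real_core (d m : ℕ) (p : Fin m → ℝ) (a : Fin m → Fin d → ℝ) (r : Fin d → ℝ)
    (h1 : ∀ μ, p μ = ∑ n, a μ n) (h2 : ∀ n, ∑ μ, a μ n = r n)
    (h3 : ∀ μ n, 0 ≤ a μ n) (h4 : ∑ n, r n = 1) :
    (∑ μ, p μ * ∑ n, (a μ n / p μ)^2 / 2) - ∑ n, r n ^ 2 / 2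
      = (1/4) * ∑ n, ∑ μ, ∑ ν, p μ * p ν * (a μ n / p μ - a ν n / p ν)^2 := by
  have hp0 : ∀ μ, 0 ≤ p μ := fun μ => (h1 μ) ▸ Finset.sum_nonneg fun n _ => h3 μ n
  have ha0 : ∀ μ, p μ = 0 → ∀ n, a μ n = 0 := by
    intro μ hμ n
    have := (Finset.sum_eq_zero_iff_of_nonneg (fun n _ => h3 μ n)).mp ((h1 μ).symm.trans hμ)
    exact this n (Finset.mem_univ n)
  have key : ∀ μ n, p μ * (a μ n / p μ) = a μ n := by
    intro μ n
    rcases eq_or_ne (p μ) 0 with h | h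
    · simp [h, ha0 μ h n]
    · field_simp
  have hpsum : ∑ μ, p μ = 1 := by
    calc ∑ μ, p μ = ∑ μ, ∑ n, a μ n := by simp [h1]
    _ = ∑ n, ∑ μ, a μ n := Finset.sum_comm
    _ = 1 := by simp [h2, h4]
  have inner : ∀ n, ∑ μ, ∑ ν, p μ * p ν * (a μ n / p μ - a ν n / p ν)^2
      = 2 * (∑ μ, p μ * (a μ n / p μ)^2) - 2 * r n ^ 2 := by
    intro n
    have expand : ∀ μ ν, p μ * p ν * (a μ n / p μ - a ν n / p ν)^2
        = (p μ * (a μ n / p μ)^2) * p ν + p μ * (p ν * (a ν n / p ν)^2)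
          - 2 * ((p μ * (a μ n / p μ)) * (p ν * (a ν n / p ν))) := by
      intro μ ν; ring
    calc ∑ μ, ∑ ν, p μ * p ν * (a μ n / p μ - a ν n / p ν)^2
        = ∑ μ, ∑ ν, ((p μ * (a μ n / p μ)^2) * p ν + p μ * (p ν * (a ν n / p ν)^2)
            - 2 * ((p μ * (a μ n / p μ)) * (p ν * (a ν n / p ν)))) := by
          exact Finset.sum_congr rfl fun μ _ => Finset.sum_congr rfl fun ν _ => expand μ ν
      _ = (∑ μ, ∑ ν, (p μ * (a μ n / p μ)^2) * p ν)
          + (∑ μ, ∑ ν, p μ * (p ν * (a ν n / p ν)^2))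
          - ∑ μ, ∑ ν, 2 * ((p μ * (a μ n / p μ)) * (p ν * (a ν n / p ν))) := by
          simp [Finset.sum_add_distrib, Finset.sum_sub_distrib]
      _ = 2 * (∑ μ, p μ * (a μ n / p μ)^2) - 2 * r n ^ 2 := by
          rw [show (∑ μ, ∑ ν, (p μ * (a μ n / p μ)^2) * p ν)
              = (∑ μ, p μ * (a μ n / p μ)^2) * (∑ ν, p ν) by
            rw [Finset.sum_mul]; exact Finset.sum_congr rfl fun μ _ => (Finset.mul_sum _ _ _).symm]
          rw [show (∑ μ, ∑ ν, p μ * (p ν * (a ν n / p ν)^2))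
              = (∑ μ, p μ) * (∑ ν, p ν * (a ν n / p ν)^2) by
            rw [Finset.sum_mul]; exact Finset.sum_congr rfl fun μ _ => (Finset.mul_sum _ _ _).symm]
          rw [show (∑ μ, ∑ ν, 2 * ((p μ * (a μ n / p μ)) * (p ν * (a ν n / p ν))))
              = 2 * ((∑ μ, p μ * (a μ n / p μ)) * (∑ ν, p ν * (a ν n / p ν))) by
            simp only [Finset.mul_sum, Finset.sum_mul]
            exact Finset.sum_congr rfl fun μ _ => Finset.sum_congr rfl fun ν _ => by ring]
          simp only [key]
          rw [hpsum, h2 n]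
          ring
  rw [Finset.mul_sum]
  rw [show (∑ n, (1:ℝ)/4 * ∑ μ, ∑ ν, p μ * p ν * (a μ n / p μ - a ν n / p ν)^2)
      = ∑ n, ((1:ℝ)/4) * (2 * (∑ μ, p μ * (a μ n / p μ)^2) - 2 * r n ^ 2) by
    exact Finset.sum_congr rfl fun n _ => by rw [inner n]]
  rw [show (∑ μ, p μ * ∑ n, (a μ n / p μ)^2/2) = ∑ μ, ∑ n, p μ * ((a μ n / p μ)^2/2) by
    exact Finset.sum_congr rfl fun μ _ => Finset.mul_sum _ _ _]
  rw [Finset.sum_comm]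
  rw [← Finset.sum_sub_distrib]
  refine Finset.sum_congr rfl fun n _ => ?_
  rw [show (∑ μ, p μ * ((a μ n / p μ)^2/2)) = (1/2) * ∑ μ, p μ * (a μ n / p μ)^2 by
    rw [Finset.mul_sum]; exact Finset.sum_congr rfl fun μ _ => by ring]
  ring

/-- For every density matrix `ρ`, the expected one-step increase of `V` under
the measurement dynamics equals `Q(ρ)`:
`Σ_{μ : p_{μ,ρ}>0} p_{μ,ρ} V(𝕄_μ(ρ)) − V(ρ) = Q(ρ)`, and `Q(ρ) ≥ 0`, so `V` is a
submartingale for the open-loop measurement dynamics. -/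
theorem stmt_2 (d m : ℕ) (hd : 1 ≤ d) (hm : 1 ≤ m)
    (M : Fin m → Matrix (Fin d) (Fin d) ℂ) (c : Fin m → Fin d → ℂ)
    (hQND : ∀ μ, M μ = Matrix.diagonal (c μ))
    (hKraus : ∑ μ, (M μ)ᴴ * M μ = 1)
    (ρ : Matrix (Fin d) (Fin d) ℂ)
    (hρ : ρ.PosSemidef ∧ ρ.trace = 1) :
    (∑ μ, if 0 < pMeas M ρ μ then pMeas M ρ μ * Vfun (MMap M μ ρ) else 0) - Vfun ρ =
      Qfun M c ρ ∧ 0 ≤ Qfun M c ρ := by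
  set a : Fin m → Fin d → ℝ := fun μ n => Complex.normSq (c μ n) * (ρ n n).re with ha
  set p : Fin m → ℝ := pMeas M ρ with hpdef
  set r : Fin d → ℝ := fun n => (ρ n n).re with hr
  have hdiag : ∀ n, 0 ≤ (ρ n n).re := by
    intro n
    have := hρ.1.re_dotProduct_nonneg (Pi.single n 1)
    simpa [dotProduct, mulVec, Pi.single_apply, Finset.sum_ite_eq, Finset.sum_ite_eq'] using this
  have hentry : ∀ μ n, (M μ * ρ * (M μ)ᴴ) n n = (Complex.normSq (c μ n) : ℂ) * ρ n n := by
    intro μ n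
    rw [hQND, Matrix.diagonal_conjTranspose, Matrix.mul_diagonal, Matrix.diagonal_mul]
    simp [Pi.star_apply]
    rw [show c μ n * ρ n n * (starRingEnd ℂ) (c μ n)
        = (c μ n * (starRingEnd ℂ) (c μ n)) * ρ n n by ring, Complex.mul_conj]
  have h1 : ∀ μ, p μ = ∑ n, a μ n := by
    intro μ
    rw [hpdef, pMeas, Matrix.trace]
    simp only [Matrix.diag_apply, hentry, Complex.re_sum]
    exact Finset.sum_congr rfl fun n _ => by simp [ha, Complex.mul_re]
  have hK : ∀ n, ∑ μ, Complex.normSq (c μ n) = 1 := by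
    intro n
    have h0 := congrFun (congrFun hKraus n) n
    simp only [Matrix.sum_apply, Matrix.one_apply_eq] at h0
    have h2 : ∀ μ, ((M μ)ᴴ * M μ) n n = (Complex.normSq (c μ n) : ℂ) := by
      intro μ
      rw [hQND, Matrix.diagonal_conjTranspose, Matrix.diagonal_mul_diagonal]
      simp [Matrix.diagonal_apply_eq, Pi.star_apply, mul_comm, Complex.mul_conj]
    rw [Finset.sum_congr rfl fun μ _ => h2 μ] at h0
    have := congrArg Complex.re h0
    simpa [Complex.re_sum] using this
  have h2 : ∀ n, ∑ μ, a μ n = r n := by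
    intro n
    rw [show (∑ μ, a μ n) = (∑ μ, Complex.normSq (c μ n)) * r n from
      (Finset.sum_mul _ _ _).symm, hK n, one_mul]
  have h3 : ∀ μ n, 0 ≤ a μ n := fun μ n => mul_nonneg (Complex.normSq_nonneg _) (hdiag n)
  have h4 : ∑ n, r n = 1 := by
    have := congrArg Complex.re hρ.2
    simpa [Matrix.trace, Complex.re_sum] using this
  have hp0 : ∀ μ, 0 ≤ p μ := fun μ => (h1 μ) ▸ Finset.sum_nonneg fun n _ => h3 μ n
  have hV : ∀ μ, Vfun (MMap M μ ρ) = ∑ n, (a μ n / p μ)^2 / 2 := by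
    intro μ
    rw [Vfun]
    refine Finset.sum_congr rfl fun n _ => ?_
    rw [MMap, Matrix.smul_apply, hentry, smul_eq_mul, ← Complex.ofReal_inv,
      ← mul_assoc, ← Complex.ofReal_mul, Complex.re_ofReal_mul]
    rw [div_eq_mul_inv]
    ring
  have hLHS : (∑ μ, if 0 < pMeas M ρ μ then pMeas M ρ μ * Vfun (MMap M μ ρ) else 0)
      = ∑ μ, p μ * ∑ n, (a μ n / p μ)^2 / 2 := by
    refine Finset.sum_congr rfl fun μ _ => ?_
    by_cases h : 0 < pMeas M ρ μ
    · rw [if_pos h, hV μ]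
    · rw [if_neg h]
      have hz : p μ = 0 := le_antisymm (not_lt.1 h) (hp0 μ)
      rw [hz, zero_mul]
  have hQ : Qfun M c ρ = (1/4) * ∑ n, ∑ μ, ∑ ν, p μ * p ν * (a μ n / p μ - a ν n / p ν)^2 := by
    rw [Qfun]
    congr 1
    refine Finset.sum_congr rfl fun n _ => Finset.sum_congr rfl fun μ _ =>
      Finset.sum_congr rfl fun ν _ => ?_
    by_cases h : 0 < pMeas M ρ μ * pMeas M ρ ν
    · rw [if_pos h]
    · rw [if_neg h]
      have hz : p μ * p ν = 0 := le_antisymm (not_lt.1 h) (mul_nonneg (hp0 μ) (hp0 ν))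
      rw [hz, zero_mul]
  have hVρ : Vfun ρ = ∑ n, r n ^ 2 / 2 := rfl
  constructor
  · rw [hLHS, hVρ, hQ]
    exact stmt_2_real_core d m p a r h1 h2 h3 h4
  · rw [Qfun]
    refine mul_nonneg (by norm_num) (Finset.sum_nonneg fun n _ =>
      Finset.sum_nonneg fun μ _ => Finset.sum_nonneg fun ν _ => ?_)
    by_cases h : 0 < pMeas M ρ μ * pMeas M ρ ν
    · rw [if_pos h]; exact mul_nonneg h.le (sq_nonneg _)
    · rw [if_neg h]
end

section
/- Suppose a density matrix ρ ∈ D satisfies Q(ρ) = 0 and n̄ ∈ {1,…,d} satisfies ⟨n̄|ρ|n̄⟩ > 0. Then for every μ ∈ {1,…,m} with p_{μ,ρ} > 0, one has tr(M_μ ρ M_μ†) = |c_{μ,n̄}|². -/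
open Matrix BigOperators
open scoped ComplexOrder

/-!
Every summand of `Q` is nonnegative, so `Q(ρ) = 0` makes `|c_{μ,n}|² ⟨n|ρ|n⟩ / p_μ` independent
of `μ` among the outcomes with `p_μ > 0`. At `n̄`, where `⟨n̄|ρ|n̄⟩ > 0`, this gives
`|c_{ν,n̄}|² = λ p_ν` for every `ν`; when `p_ν = 0` both sides vanish because
`p_ν ≥ |c_{ν,n̄}|² ⟨n̄|ρ|n̄⟩`. Summing over `ν`, the Kraus relation gives `Σ_ν |c_{ν,n̄}|² = 1`
and `tr ρ = 1` gives `Σ_ν p_ν = 1`, hence `λ = 1`.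
-/

open Complex

section Diagonal

variable {n : Type*} [Fintype n] [DecidableEq n]

theorem re_trace_diagonal_mul_mul_conjTranspose (a : n → ℂ) (ρ : Matrix n n ℂ) :
    (diagonal a * ρ * (diagonal a)ᴴ).trace.re = ∑ i, normSq (a i) * (ρ i i).re := by
  simp only [diagonal_conjTranspose, trace, diag, mul_diagonal, diagonal_mul, re_sum,
    Pi.star_apply]
  refine Finset.sum_congr rfl fun i _ => ?_
  rw [mul_right_comm, ← starRingEnd_apply, mul_conj, re_ofReal_mul]

theorem sum_normSq_eq_one_of_sum_conjTranspose_mul_self {ι : Type*} [Fintype ι]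
    (a : ι → n → ℂ) (h : ∑ k, (diagonal (a k))ᴴ * diagonal (a k) = 1) (i : n) :
    ∑ k, normSq (a k i) = 1 := by
  have hentry : ∀ k, ((diagonal (a k))ᴴ * diagonal (a k)) i i = normSq (a k i) := fun k => by
    rw [diagonal_conjTranspose, diagonal_mul_diagonal, diagonal_apply_eq, Pi.star_apply,
      ← starRingEnd_apply, mul_comm, mul_conj]
  have hii := congrFun (congrFun h i) i
  rw [Matrix.sum_apply, one_apply_eq] at hii
  simp only [hentry] at hii
  exact_mod_cast hii

end Diagonal

theorem eq_zero_of_sum_sum_sum_eq_zero {α β γ : Type*} [Fintype α] [Fintype β] [Fintype γ]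
    {f : α → β → γ → ℝ} (h : ∑ a, ∑ b, ∑ c, f a b c = 0) (hf : ∀ a b c, 0 ≤ f a b c)
    (a : α) (b : β) (c : γ) : f a b c = 0 := by
  have ha := congrFun ((Fintype.sum_eq_zero_iff_of_nonneg fun a =>
    Finset.sum_nonneg fun b _ => Finset.sum_nonneg fun c _ => hf a b c).1 h) a
  have hb := congrFun ((Fintype.sum_eq_zero_iff_of_nonneg fun b =>
    Finset.sum_nonneg fun c _ => hf a b c).1 ha) b
  exact congrFun ((Fintype.sum_eq_zero_iff_of_nonneg (hf a b)).1 hb) c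

variable {d m : ℕ} {M : Fin m → Matrix (Fin d) (Fin d) ℂ} {c : Fin m → Fin d → ℂ}
  {ρ : Matrix (Fin d) (Fin d) ℂ}

theorem pMeas_eq_sum (hQND : ∀ μ, M μ = diagonal (c μ)) (μ : Fin m) :
    pMeas M ρ μ = ∑ n, normSq (c μ n) * (ρ n n).re := by
  rw [pMeas, hQND, re_trace_diagonal_mul_mul_conjTranspose]

theorem sum_pMeas_eq_one (hQND : ∀ μ, M μ = diagonal (c μ))
    (hKraus : ∑ μ, (M μ)ᴴ * M μ = 1) (hρ : ρ.trace = 1) : ∑ μ, pMeas M ρ μ = 1 := by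
  simp only [hQND] at hKraus
  simp only [pMeas_eq_sum hQND]
  rw [Finset.sum_comm]
  simp only [← Finset.sum_mul, sum_normSq_eq_one_of_sum_conjTranspose_mul_self c hKraus,
    one_mul]
  simpa [trace, re_sum] using congrArg re hρ

theorem div_pMeas_eq_of_Qfun_eq_zero (hQ : Qfun M c ρ = 0) {μ ν : Fin m}
    (hμ : 0 < pMeas M ρ μ) (hν : 0 < pMeas M ρ ν) (n : Fin d) :
    normSq (c μ n) * (ρ n n).re / pMeas M ρ μ = normSq (c ν n) * (ρ n n).re / pMeas M ρ ν := by
  rw [Qfun, mul_eq_zero, or_iff_right (by norm_num)] at hQ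
  have hterm := eq_zero_of_sum_sum_sum_eq_zero hQ (fun _ _ _ => by split_ifs <;> positivity) n μ ν
  rw [if_pos (mul_pos hμ hν), mul_eq_zero, or_iff_right (mul_pos hμ hν).ne',
    sq_eq_zero_iff, sub_eq_zero] at hterm
  exact hterm

theorem normSq_mul_re_le_pMeas (hQND : ∀ μ, M μ = diagonal (c μ)) (hρ : ρ.PosSemidef)
    (μ : Fin m) (n : Fin d) : normSq (c μ n) * (ρ n n).re ≤ pMeas M ρ μ := by
  rw [pMeas_eq_sum hQND]
  exact Finset.single_le_sum (f := fun k => normSq (c μ k) * (ρ k k).re)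
    (fun k _ => mul_nonneg (normSq_nonneg _) (Complex.le_def.mp hρ.diag_nonneg).1)
    (Finset.mem_univ n)

theorem normSq_eq_div_pMeas_mul_pMeas (hQND : ∀ μ, M μ = diagonal (c μ)) (hρ : ρ.PosSemidef)
    (hQ : Qfun M c ρ = 0) {nbar : Fin d} (hnbar : 0 < (ρ nbar nbar).re) {μ : Fin m}
    (hμ : 0 < pMeas M ρ μ) (ν : Fin m) :
    normSq (c ν nbar) = normSq (c μ nbar) / pMeas M ρ μ * pMeas M ρ ν := by
  have hle := normSq_mul_re_le_pMeas hQND hρ ν nbar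
  rcases ((mul_nonneg (normSq_nonneg _) hnbar.le).trans hle).lt_or_eq with hν | hν
  · have h := div_pMeas_eq_of_Qfun_eq_zero hQ hμ hν nbar
    rw [mul_div_right_comm, mul_div_right_comm (normSq _)] at h
    rw [mul_right_cancel₀ hnbar.ne' h, div_mul_cancel₀ _ hν.ne']
  · rw [← hν] at hle ⊢
    nlinarith [normSq_nonneg (c ν nbar)]

theorem stmt_3_general (d m : ℕ)
    (M : Fin m → Matrix (Fin d) (Fin d) ℂ) (c : Fin m → Fin d → ℂ)
    (hQND : ∀ μ, M μ = Matrix.diagonal (c μ))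
    (hKraus : ∑ μ, (M μ)ᴴ * M μ = 1)
    (ρ : Matrix (Fin d) (Fin d) ℂ)
    (hρ : ρ.PosSemidef ∧ ρ.trace = 1)
    (hQ : Qfun M c ρ = 0)
    (nbar : Fin d) (hnbar : 0 < (ρ nbar nbar).re) :
    ∀ μ, 0 < pMeas M ρ μ → pMeas M ρ μ = Complex.normSq (c μ nbar) := by
  intro μ hμ
  have hprop := normSq_eq_div_pMeas_mul_pMeas hQND hρ.1 hQ hnbar hμ
  have hratio : normSq (c μ nbar) / pMeas M ρ μ = 1 := by
    have hsum := sum_normSq_eq_one_of_sum_conjTranspose_mul_self c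
      (by simpa only [hQND] using hKraus) nbar
    rwa [Finset.sum_congr rfl fun ν _ => hprop ν, ← Finset.mul_sum,
      sum_pMeas_eq_one hQND hKraus hρ.2, mul_one] at hsum
  rw [div_eq_one_iff_eq hμ.ne'] at hratio
  exact hratio.symm

/-- If `Q(ρ) = 0` and `⟨n̄|ρ|n̄⟩ > 0`, then for every `μ` with `p_{μ,ρ} > 0`
one has `tr(M_μ ρ M_μ†) = |c_{μ,n̄}|²`. -/
theorem stmt_3 (d m : ℕ) (hd : 1 ≤ d) (hm : 1 ≤ m)
    (M : Fin m → Matrix (Fin d) (Fin d) ℂ) (c : Fin m → Fin d → ℂ)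
    (hQND : ∀ μ, M μ = Matrix.diagonal (c μ))
    (hKraus : ∑ μ, (M μ)ᴴ * M μ = 1)
    (ρ : Matrix (Fin d) (Fin d) ℂ)
    (hρ : ρ.PosSemidef ∧ ρ.trace = 1)
    (hQ : Qfun M c ρ = 0)
    (nbar : Fin d) (hnbar : 0 < (ρ nbar nbar).re) :
    ∀ μ, 0 < pMeas M ρ μ → pMeas M ρ μ = Complex.normSq (c μ nbar) :=
  stmt_3_general d m M c hQND hKraus ρ hρ hQ nbar hnbar
end

section
/- Under the QND assumption and the distinguishability assumption, if a density matrix ρ ∈ D satisfies Q(ρ) = 0, then ρ is one of the d projectors onto basis states: there exists n ∈ {1,…,d} such that ρ = |n⟩⟨n|. -/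
open Matrix BigOperators
open scoped ComplexOrder

/-! If `Q(ρ) = 0`, then for every basis index `n` with `ρₙₙ > 0` the ratio `|c_{μ,n}|² / p_μ`
is the same for all outcomes `μ` with `p_μ > 0`. Both `μ ↦ |c_{μ,n}|²` (by the Kraus relation)
and `μ ↦ p_μ` sum to one, so the common ratio is `1` and `|c_{μ,n}|² = p_μ` for every `μ`.
Distinguishability therefore leaves room for only one index `n` with `ρₙₙ > 0`, and a positive
semidefinite matrix of trace one whose other diagonal entries vanish is `|n⟩⟨n|`. -/

namespace Matrix.PosSemidef

variable {n 𝕜 : Type*} [Fintype n] [RCLike 𝕜] {A : Matrix n n 𝕜}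

lemma apply_eq_zero_of_diag_eq_zero_right (hA : A.PosSemidef) {j : n} (hj : A j j = 0)
    (i : n) : A i j = 0 := by
  classical
  have hcol : A *ᵥ Pi.single j 1 = 0 :=
    (hA.dotProduct_mulVec_zero_iff _).mp (by simpa [mulVec_single_one] using hj)
  simpa [mulVec_single_one] using congr_fun hcol i

lemma apply_eq_zero_of_diag_eq_zero_left (hA : A.PosSemidef) {i : n} (hi : A i i = 0)
    (j : n) : A i j = 0 := by
  rw [← hA.isHermitian.apply, hA.apply_eq_zero_of_diag_eq_zero_right hi, star_zero]

lemma eq_single_of_diag_eq_zero [DecidableEq n] (hA : A.PosSemidef) (htr : A.trace = 1)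
    {k : n} (hdiag : ∀ i, i ≠ k → A i i = 0) : A = single k k 1 := by
  have hk : A k k = 1 := by
    rw [← htr, trace, Fintype.sum_eq_single (f := A.diag) k hdiag, diag_apply]
  ext i j
  by_cases hi : i = k
  · by_cases hj : j = k
    · simp [hi, hj, hk]
    · simp [hA.apply_eq_zero_of_diag_eq_zero_right (hdiag j hj), Ne.symm hj]
  · simp [hA.apply_eq_zero_of_diag_eq_zero_left (hdiag i hi), Ne.symm hi]

end Matrix.PosSemidef

open Finset

lemma eq_of_div_eq_div_of_sum_eq_one {ι : Type*} [Fintype ι] {w p : ι → ℝ}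
    (hp : ∀ i, 0 ≤ p i) (hw_sum : ∑ i, w i = 1) (hp_sum : ∑ i, p i = 1)
    (hw_zero : ∀ i, p i = 0 → w i = 0)
    (hdiv : ∀ i j, 0 < p i → 0 < p j → w i / p i = w j / p j) : w = p := by
  obtain ⟨i₀, -, hi₀⟩ : ∃ i ∈ univ, (0 : ℝ) < p i :=
    exists_lt_of_sum_lt (by simp [hp_sum])
  have hw : ∀ i, w i = w i₀ / p i₀ * p i := by
    intro i
    rcases (hp i).eq_or_lt with h | h
    · rw [← h, hw_zero i h.symm, mul_zero]
    · rw [hdiv i₀ i hi₀ h, div_mul_cancel₀ _ h.ne']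
  have hratio : w i₀ / p i₀ = 1 := by
    rw [← hw_sum, ← mul_one (w i₀ / p i₀), ← hp_sum, mul_sum]
    exact sum_congr rfl fun i _ => (hw i).symm
  funext i
  rw [hw, hratio, one_mul]

section Measurement

variable {d m : ℕ} {M : Fin m → Matrix (Fin d) (Fin d) ℂ} {c : Fin m → Fin d → ℂ}

lemma pMeas_of_eq_diagonal (ρ : Matrix (Fin d) (Fin d) ℂ) {μ : Fin m}
    (hM : M μ = Matrix.diagonal (c μ)) :
    pMeas M ρ μ = ∑ n, Complex.normSq (c μ n) * (ρ n n).re := by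
  simp only [pMeas, hM, trace, diag_apply, diagonal_conjTranspose, mul_diagonal, diagonal_mul,
    Complex.re_sum]
  refine sum_congr rfl fun n _ => ?_
  rw [Pi.star_apply, Complex.star_def, mul_right_comm, Complex.mul_conj, Complex.re_ofReal_mul]

lemma sum_pMeas_eq_re_trace (hKraus : ∑ μ, (M μ)ᴴ * M μ = 1) (ρ : Matrix (Fin d) (Fin d) ℂ) :
    ∑ μ, pMeas M ρ μ = ρ.trace.re := by
  simp only [pMeas, fun μ => trace_mul_cycle (M μ) ρ (M μ)ᴴ, ← Complex.re_sum, ← trace_sum,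
    ← Finset.sum_mul, hKraus, one_mul]

lemma sum_normSq_eq_one (hQND : ∀ μ, M μ = Matrix.diagonal (c μ))
    (hKraus : ∑ μ, (M μ)ᴴ * M μ = 1) (n : Fin d) : ∑ μ, Complex.normSq (c μ n) = 1 := by
  have h := congr_fun₂ hKraus n n
  simp only [hQND, diagonal_conjTranspose, diagonal_mul_diagonal, Pi.star_apply, RCLike.star_def,
    ← Complex.normSq_eq_conj_mul_self, Matrix.sum_apply, diagonal_apply_eq, one_apply_eq] at h
  exact_mod_cast h

lemma div_eq_div_of_Qfun_eq_zero {ρ : Matrix (Fin d) (Fin d) ℂ} (hQ : Qfun M c ρ = 0)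
    {μ ν : Fin m} (hμν : 0 < pMeas M ρ μ * pMeas M ρ ν) (n : Fin d) :
    Complex.normSq (c μ n) * (ρ n n).re / pMeas M ρ μ =
      Complex.normSq (c ν n) * (ρ n n).re / pMeas M ρ ν := by
  have hsum := (mul_eq_zero.mp hQ).resolve_left (by norm_num)
  simp only [← Fintype.sum_prod_type'] at hsum
  have hterm := congr_fun ((Fintype.sum_eq_zero_iff_of_nonneg fun x => ?nonneg).mp hsum) (n, μ, ν)
  · simpa only [Pi.zero_apply, if_pos hμν, mul_eq_zero, hμν.ne', false_or,
      pow_eq_zero_iff two_ne_zero, sub_eq_zero] using hterm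
  case nonneg =>
    dsimp only
    split_ifs with h
    · exact mul_nonneg h.le (sq_nonneg _)
    · exact le_rfl

lemma normSq_eq_pMeas_of_Qfun_eq_zero (hQND : ∀ μ, M μ = Matrix.diagonal (c μ))
    (hKraus : ∑ μ, (M μ)ᴴ * M μ = 1) {ρ : Matrix (Fin d) (Fin d) ℂ}
    (hdiag : ∀ n, 0 ≤ (ρ n n).re) (htr : ρ.trace.re = 1) (hQ : Qfun M c ρ = 0)
    ⦃n : Fin d⦄ (hn : 0 < (ρ n n).re) : (fun μ => Complex.normSq (c μ n)) = pMeas M ρ := by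
  have hterm_nonneg : ∀ μ k, 0 ≤ Complex.normSq (c μ k) * (ρ k k).re :=
    fun μ k => mul_nonneg (Complex.normSq_nonneg _) (hdiag k)
  refine eq_of_div_eq_div_of_sum_eq_one (fun μ => ?_) (sum_normSq_eq_one hQND hKraus n)
    (htr ▸ sum_pMeas_eq_re_trace hKraus ρ) (fun μ hμ => ?_) (fun μ ν hμ hν => ?_)
  · rw [pMeas_of_eq_diagonal ρ (hQND μ)]
    exact sum_nonneg fun k _ => hterm_nonneg μ k
  · rw [pMeas_of_eq_diagonal ρ (hQND μ), sum_eq_zero_iff_of_nonneg fun k _ => hterm_nonneg μ k]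
      at hμ
    exact (mul_eq_zero.mp (hμ n (mem_univ n))).resolve_right hn.ne'
  · have h := div_eq_div_of_Qfun_eq_zero hQ (mul_pos hμ hν) n
    rw [mul_div_right_comm, mul_div_right_comm (Complex.normSq _)] at h
    exact mul_right_cancel₀ hn.ne' h

end Measurement

theorem stmt_4_general (d m : ℕ)
    (M : Fin m → Matrix (Fin d) (Fin d) ℂ) (c : Fin m → Fin d → ℂ)
    (hQND : ∀ μ, M μ = Matrix.diagonal (c μ))
    (hKraus : ∑ μ, (M μ)ᴴ * M μ = 1)
    (hdist : ∀ n₁ n₂ : Fin d, n₁ ≠ n₂ →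
      ∃ μ, Complex.normSq (c μ n₁) ≠ Complex.normSq (c μ n₂))
    (ρ : Matrix (Fin d) (Fin d) ℂ)
    (hρ : ρ.PosSemidef ∧ ρ.trace = 1)
    (hQ : Qfun M c ρ = 0) :
    ∃ n : Fin d, ρ = Matrix.single n n 1 := by
  obtain ⟨hPSD, htr⟩ := hρ
  have hdiag_nonneg : ∀ n, 0 ≤ (ρ n n).re := fun n =>
    (Complex.nonneg_iff.mp hPSD.diag_nonneg).1
  have hdiag_im : ∀ n, (ρ n n).im = 0 := fun n =>
    (Complex.nonneg_iff.mp hPSD.diag_nonneg).2.symm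
  have hsum_diag : ∑ n, (ρ n n).re = 1 := by
    simpa [trace, Complex.re_sum] using congrArg Complex.re htr
  have hweights := normSq_eq_pMeas_of_Qfun_eq_zero hQND hKraus hdiag_nonneg
    (by rw [htr, Complex.one_re]) hQ
  have hsupport : ∀ {n n'}, 0 < (ρ n n).re → 0 < (ρ n' n').re → n = n' := by
    intro n n' hn hn'
    by_contra hne
    obtain ⟨μ, hμ⟩ := hdist n n' hne
    exact hμ (congr_fun ((hweights hn).trans (hweights hn').symm) μ)
  obtain ⟨n, -, hn⟩ : ∃ n ∈ univ, (0 : ℝ) < (ρ n n).re :=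
    exists_lt_of_sum_lt (by simp [hsum_diag])
  refine ⟨n, hPSD.eq_single_of_diag_eq_zero htr fun i hi => ?_⟩
  have hi_re : (ρ i i).re = 0 :=
    le_antisymm (not_lt.mp fun h => hi (hsupport h hn)) (hdiag_nonneg i)
  exact Complex.ext hi_re (hdiag_im i)

/-- Under the QND assumption and the distinguishability assumption, if a
density matrix `ρ` satisfies `Q(ρ) = 0` then `ρ = |n⟩⟨n|` for some basis index `n`. -/
theorem stmt_4 (d m : ℕ) (hd : 1 ≤ d) (hm : 1 ≤ m)
    (M : Fin m → Matrix (Fin d) (Fin d) ℂ) (c : Fin m → Fin d → ℂ)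
    (hQND : ∀ μ, M μ = Matrix.diagonal (c μ))
    (hKraus : ∑ μ, (M μ)ᴴ * M μ = 1)
    (hdist : ∀ n₁ n₂ : Fin d, n₁ ≠ n₂ →
      ∃ μ, Complex.normSq (c μ n₁) ≠ Complex.normSq (c μ n₂))
    (ρ : Matrix (Fin d) (Fin d) ℂ)
    (hρ : ρ.PosSemidef ∧ ρ.trace = 1)
    (hQ : Qfun M c ρ = 0) :
    ∃ n : Fin d, ρ = Matrix.single n n 1 :=
  stmt_4_general d m M c hQND hKraus hdist ρ hρ hQ
end

section
/- (Appendix Theorem, stochastic invariance-type principle.) Let S be a compact metric space, (Ω, F, P) a probability space with filtration (F_k)_{k∈ℕ}, and (X_k)_{k∈ℕ} an adapted S-valued process. Suppose V : S → [0, ∞) is a bounded measurable function and Q : S → [0, ∞) is a continuous function such that for every k, E[V(X_{k+1}) | F_k] − V(X_k) = Q(X_k) almost surely. Then, almost surely, every limit point x ∈ S of the sequence (X_k) satisfies Q(x) = 0; i.e. the ω-limit set of (X_k) is almost surely contained in {x ∈ S : Q(x) = 0}. -/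
open MeasureTheory Filter

/-- Appendix Theorem, stochastic invariance-type principle: if
`E[V(X_{k+1}) | F_k] − V(X_k) = Q(X_k)` a.s. for a bounded measurable `V ≥ 0` and a
continuous `Q ≥ 0` on a compact metric space `S`, then almost surely every limit point `x`
of `(X_k)` satisfies `Q(x) = 0`. -/
theorem stmt_17 (S : Type*) [MetricSpace S] [CompactSpace S]
    [MeasurableSpace S] [BorelSpace S]
    (Ω : Type*) (m0 : MeasurableSpace Ω) (P : Measure Ω) [IsProbabilityMeasure P]
    (ℱ : Filtration ℕ m0)
    (X : ℕ → Ω → S) (hadapted : Adapted ℱ X)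
    (hXmeas : ∀ k, Measurable (X k))
    (V : S → ℝ) (hVmeas : Measurable V) (hVnonneg : ∀ x, 0 ≤ V x)
    (hVbdd : ∃ C, ∀ x, |V x| ≤ C)
    (Q : S → ℝ) (hQcont : Continuous Q) (hQnonneg : ∀ x, 0 ≤ Q x)
    (hmarkov : ∀ k : ℕ,
      P[(fun ω => V (X (k + 1) ω)) | ℱ k] =ᵐ[P]
        fun ω => V (X k ω) + Q (X k ω)) :
    ∀ᵐ ω ∂P, ∀ x : S,
      (∃ φ : ℕ → ℕ, StrictMono φ ∧
        Tendsto (fun j => X (φ j) ω) atTop (nhds x)) → Q x = 0 := by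
  obtain ⟨C, hC⟩ := hVbdd
  -- Ω is nonempty since P is a probability measure
  have hΩ : Nonempty Ω := by
    by_contra h
    rw [not_nonempty_iff] at h
    have h1 := measure_univ (μ := P)
    rw [Set.univ_eq_empty_iff.mpr h, measure_empty] at h1
    exact zero_ne_one h1
  have hC0 : 0 ≤ C := le_trans (abs_nonneg _) (hC (X 0 hΩ.some))
  -- Q is bounded
  obtain ⟨D, hD⟩ : ∃ D, ∀ x, |Q x| ≤ D := by
    obtain ⟨D, hD⟩ := (isCompact_range hQcont).bddAbove
    exact ⟨D, fun x => by
      rw [abs_of_nonneg (hQnonneg x)]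
      exact hD (Set.mem_range_self x)⟩
  -- integrability of all composites
  have hVint : ∀ k, Integrable (fun ω => V (X k ω)) P :=
    fun k => ⟨(hVmeas.comp (hXmeas k)).aestronglyMeasurable,
      HasFiniteIntegral.of_bounded (C := C) (ae_of_all _ fun ω => hC _)⟩
  have hQint : ∀ k, Integrable (fun ω => Q (X k ω)) P :=
    fun k => ⟨(hQcont.measurable.comp (hXmeas k)).aestronglyMeasurable,
      HasFiniteIntegral.of_bounded (C := D) (ae_of_all _ fun ω => hD _)⟩
  -- one-step expectation identity
  have hstep : ∀ k, ∫ ω, V (X (k + 1) ω) ∂P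
      = ∫ ω, V (X k ω) ∂P + ∫ ω, Q (X k ω) ∂P := by
    intro k
    have h1 : ∫ ω, (P[(fun ω => V (X (k + 1) ω)) | ℱ k]) ω ∂P
        = ∫ ω, V (X (k + 1) ω) ∂P := integral_condExp (ℱ.le k)
    calc ∫ ω, V (X (k + 1) ω) ∂P
        = ∫ ω, (V (X k ω) + Q (X k ω)) ∂P := by
          rw [← h1]; exact integral_congr_ae (hmarkov k)
      _ = ∫ ω, V (X k ω) ∂P + ∫ ω, Q (X k ω) ∂P :=
          integral_add (hVint k) (hQint k)
  -- telescoping: partial sums of expectations are bounded by C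
  have htel : ∀ n, ∑ k ∈ Finset.range n, ∫ ω, Q (X k ω) ∂P
      = ∫ ω, V (X n ω) ∂P - ∫ ω, V (X 0 ω) ∂P := by
    intro n
    induction n with
    | zero => simp
    | succ n ih => rw [Finset.sum_range_succ, ih, hstep n]; ring
  have hsum_bdd : ∀ n, ∑ k ∈ Finset.range n, ∫ ω, Q (X k ω) ∂P ≤ C := by
    intro n
    rw [htel n]
    have h1 : ∫ ω, V (X n ω) ∂P ≤ C := by
      calc ∫ ω, V (X n ω) ∂P ≤ ∫ _ω, C ∂P :=
            integral_mono (hVint n) (integrable_const C)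
              (fun ω => (abs_le.mp (hC _)).2)
        _ = C := by simp
    have h2 : 0 ≤ ∫ ω, V (X 0 ω) ∂P :=
      integral_nonneg fun ω => hVnonneg _
    linarith
  have hsummable : Summable (fun k => ∫ ω, Q (X k ω) ∂P) :=
    summable_of_sum_range_le (fun k => integral_nonneg fun ω => hQnonneg _) hsum_bdd
  -- pass to a.e. summability of Q (X k ω)
  have hmeasQ : ∀ k, Measurable (fun ω => ENNReal.ofReal (Q (X k ω))) :=
    fun k => ENNReal.measurable_ofReal.comp (hQcont.measurable.comp (hXmeas k))
  have hlint : ∫⁻ ω, ∑' k, ENNReal.ofReal (Q (X k ω)) ∂P ≠ ⊤ := by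
    rw [lintegral_tsum fun k => (hmeasQ k).aemeasurable]
    have heq : ∀ k, ∫⁻ ω, ENNReal.ofReal (Q (X k ω)) ∂P
        = ENNReal.ofReal (∫ ω, Q (X k ω) ∂P) :=
      fun k => (ofReal_integral_eq_lintegral_ofReal (hQint k)
        (ae_of_all _ fun ω => hQnonneg _)).symm
    simp_rw [heq]
    rw [← ENNReal.ofReal_tsum_of_nonneg (fun k => integral_nonneg fun ω => hQnonneg _)
      hsummable]
    exact ENNReal.ofReal_ne_top
  have hae : ∀ᵐ ω ∂P, (∑' k, ENNReal.ofReal (Q (X k ω))) < ⊤ :=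
    ae_lt_top (Measurable.ennreal_tsum hmeasQ) hlint
  filter_upwards [hae] with ω hω x ⟨φ, hφ, hx⟩
  -- from finite sum: Q (X k ω) → 0
  have hsum' : Summable (fun k => (Q (X k ω)).toNNReal) := by
    rw [← ENNReal.tsum_coe_ne_top_iff_summable]
    simpa [ENNReal.ofReal] using hω.ne
  have hsumR : Summable (fun k => Q (X k ω)) := by
    have h := NNReal.summable_coe.mpr hsum'
    refine h.congr fun k => ?_
    exact Real.coe_toNNReal _ (hQnonneg _)
  have htend0 : Tendsto (fun k => Q (X k ω)) atTop (nhds 0) :=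
    hsumR.tendsto_atTop_zero
  have h1 : Tendsto (fun j => Q (X (φ j) ω)) atTop (nhds 0) :=
    htend0.comp hφ.tendsto_atTop
  have h2 : Tendsto (fun j => Q (X (φ j) ω)) atTop (nhds (Q x)) :=
    (hQcont.continuousAt.tendsto).comp hx
  exact tendsto_nhds_unique h2 h1
end
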